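/- Let X be a compact length space and let C : [0,L] → X be a shortest noncontractible rectifiable loop in X, parametrized by arclength. If the image of C is contained in an open ball B(q, δ), then L < 2δ. -/

import Mathlib

open Metric

/-- The length of a path in a metric space, as its total variation. -/
noncomputable def pathLength {X : Type*} [MetricSpace X] {x y : X} (γ : Path x y) : ENNReal :=
  eVariationOn (fun t => γ t) Set.univ

/-- A metric space is a length space if the distance between any two points is the
infimum of the lengths of paths joining them. -/
def IsLengthSpace (X : Type*) [MetricSpace X] : Prop :=
  ∀ x y : X, ∀ ε > 0, ∃ γ : Path x y, pathLength γ < ENNReal.ofReal (dist x y + ε)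

/-- A loop is noncontractible if it is not null-homotopic. -/
def Noncontractible {X : Type*} [TopologicalSpace X] {x : X} (γ : Path x x) : Prop :=
  ¬ γ.Homotopic (Path.refl x)

/-!
Suppose `L ≥ 2δ`. By compactness the loop lies in a smaller ball `B(q, ρ)`, `ρ < δ`, so each point
`C t` is joined to `q` by a spoke `σ t` of length `< ρ`. Since the variation of `C` over short
intervals is small, a triangle `σ t · C|[t, s] · (σ s)⁻¹` with `s` close to `t` is shorter than `L`,
hence null-homotopic. As `[0, 1]` is connected, this propagates to `C|[t₀, t₁] ≃ (σ t₀)⁻¹ · σ t₁`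
for all `t₀, t₁`; in particular `C ≃ (σ 0)⁻¹ · σ 1`, a loop of length `< 2ρ < L`, which is
null-homotopic by minimality of `L`.
-/

open Set unitInterval Filter Topology
open scoped ENNReal

lemma Set.Icc.monotone_convexComb {a b : ℝ} {t₀ t₁ : Icc a b} (h : t₀ ≤ t₁) :
    Monotone (Icc.convexComb t₀ t₁) := by
  intro s s' hs
  rw [← Subtype.coe_le_coe] at h hs ⊢
  simp only [Icc.coe_convexComb]
  nlinarith

section PathLength

variable {X : Type*} [MetricSpace X] {x y z : X}

lemma pathLength_cast {x' y' : X} (γ : Path x y) (hx : x' = x) (hy : y' = y) :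
    pathLength (γ.cast hx hy) = pathLength γ :=
  rfl

lemma pathLength_symm (γ : Path x y) : pathLength γ.symm = pathLength γ := by
  have h : (fun t => γ.symm t) = (fun t => γ t) ∘ unitInterval.symm := rfl
  rw [pathLength, h, eVariationOn.comp_eq_of_antitoneOn _ _ (fun _ _ _ _ h => symm_le_symm.2 h),
    image_univ_of_surjective symm_bijective.surjective, pathLength]

lemma pathLength_trans_le (γ : Path x y) (γ' : Path y z) :
    pathLength (γ.trans γ') ≤ pathLength γ + pathLength γ' := by
  let half : I := ⟨1 / 2, by norm_num, by norm_num⟩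
  let dilate (c : ℝ) (s : I) : I := projIcc 0 1 zero_le_one (2 * s - c)
  have hdilate (c : ℝ) : Monotone (dilate c) := fun s s' h =>
    monotone_projIcc _ (by have : (s : ℝ) ≤ s' := h; linarith)
  rw [pathLength, univ_eq_Icc, ← univ_inter (Icc _ _), ← eVariationOn.Icc_add_Icc _ (b := half)
    (Subtype.mk_le_mk.2 (by norm_num)) (Subtype.mk_le_mk.2 (by norm_num)) (mem_univ _)]
  gcongr
  · refine (eVariationOn.eq_of_eqOn (f' := γ ∘ dilate 0) fun t ht => ?_).trans_le
      (eVariationOn.comp_le_of_monotoneOn _ _ ((hdilate 0).monotoneOn _) (mapsTo_univ _ _))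
    have ht : (t : ℝ) ≤ 1 / 2 := ht.2.2
    rw [Function.comp_apply, Path.trans_apply, dif_pos ht]
    simp only [dilate, sub_zero]
    rw [projIcc_of_mem _ ⟨by linarith [t.2.1], by linarith⟩]
  · refine (eVariationOn.eq_of_eqOn (f' := γ' ∘ dilate 1) fun t ht => ?_).trans_le
      (eVariationOn.comp_le_of_monotoneOn _ _ ((hdilate 1).monotoneOn _) (mapsTo_univ _ _))
    have ht : 1 / 2 ≤ (t : ℝ) := ht.2.1
    rcases ht.eq_or_lt with h | h
    · simp [Path.trans_apply, ← h, dilate]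
    · rw [Function.comp_apply, Path.trans_apply, dif_neg (not_le.2 h)]
      simp only [dilate]
      rw [projIcc_of_mem _ ⟨by linarith, by linarith [t.2.2]⟩]

lemma pathLength_subpath_le (γ : Path x y) (t₀ t₁ : I) :
    pathLength (γ.subpath t₀ t₁) ≤ eVariationOn γ (uIcc t₀ t₁) := by
  wlog h : t₀ ≤ t₁ generalizing t₀ t₁
  · rw [← Path.symm_subpath, pathLength_symm, uIcc_comm]
    exact this t₁ t₀ (le_of_not_ge h)
  rw [uIcc_of_le h]
  exact eVariationOn.comp_le_of_monotoneOn _ _ ((Icc.monotone_convexComb h).monotoneOn _)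
    fun s _ => ⟨Icc.le_convexComb h s, Icc.convexComb_le h s⟩

end PathLength

theorem BoundedVariationOn.eventually_eVariationOn_uIcc_lt {α E : Type*} [LinearOrder α]
    [TopologicalSpace α] [OrderTopology α] [PseudoEMetricSpace E] {f : α → E}
    (hf : BoundedVariationOn f univ) {t : α} (ht : ContinuousAt f t) {ε : ℝ≥0∞} (hε : 0 < ε) :
    ∀ᶠ s in 𝓝 t, eVariationOn f (uIcc t s) < ε := by
  have hleft := hf.tendsto_eVariationOn_Icc_zero_left ht.continuousWithinAt
  have hright := hf.tendsto_eVariationOn_Icc_zero_right t ht.continuousWithinAt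
  simp only [univ_inter, nhdsWithin_univ] at hleft hright
  filter_upwards [hleft.eventually (gt_mem_nhds hε), hright.eventually (gt_mem_nhds hε)]
    with s hs_left hs_right
  rcases le_total t s with h | h
  · rwa [uIcc_of_le h]
  · rwa [uIcc_of_ge h]

namespace Path.Homotopic

variable {Y : Type*} [TopologicalSpace Y] {a b c q : Y}

lemma Quotient.mk_subpath_trans_mk_subpath (γ : Path a b) (t₀ t₁ t₂ : I) :
    (Quotient.mk (γ.subpath t₀ t₁)).trans (Quotient.mk (γ.subpath t₁ t₂)) =
      Quotient.mk (γ.subpath t₀ t₂) := by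
  rw [← Quotient.mk_trans, Quotient.eq]
  exact ⟨Homotopy.subpathTransSubpath γ t₀ t₁ t₂⟩

lemma of_trans_symm {p p' : Path a b} (h : (p.trans p'.symm).Homotopic (Path.refl a)) :
    p.Homotopic p' := by
  rw [← Quotient.eq, Quotient.mk_trans, Quotient.mk_symm, Quotient.mk_refl] at h
  rw [← Quotient.eq, ← Quotient.trans_refl (Quotient.mk p), ← Quotient.symm_trans (Quotient.mk p'),
    ← Quotient.trans_assoc, h, Quotient.refl_trans]

lemma symm_trans_of_trans {p : Path a b} {p' : Path b c} {p'' : Path a c}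
    (h : (p.trans p').Homotopic p'') : p'.Homotopic (p.symm.trans p'') := by
  rw [← Quotient.eq, Quotient.mk_trans] at h
  rw [← Quotient.eq, Quotient.mk_trans, Quotient.mk_symm, ← h, ← Quotient.trans_assoc,
    Quotient.symm_trans, Quotient.refl_trans]

theorem trans_subpath_of_eventually (γ : Path a b) (spoke : ∀ t, Path q (γ t))
    (h : ∀ t, ∀ᶠ s in 𝓝 t, ((spoke t).trans (γ.subpath t s)).Homotopic (spoke s)) (t₀ t₁ : I) :
    ((spoke t₀).trans (γ.subpath t₀ t₁)).Homotopic (spoke t₁) := by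
  let P (s t : I) : Prop :=
    (Quotient.mk (spoke s)).trans (Quotient.mk (γ.subpath s t)) = Quotient.mk (spoke t)
  have hsymm (s t : I) (hst : P s t) : P t s := by
    dsimp only [P] at hst ⊢
    rw [← hst, Quotient.trans_assoc, Quotient.mk_subpath_trans_mk_subpath, subpath_self,
      Quotient.mk_refl, Quotient.trans_refl]
  have htrans : IsTrans I P := ⟨fun r s t hrs hst => by
    dsimp only [P] at hrs hst ⊢
    rw [← hst, ← hrs, Quotient.trans_assoc, Quotient.mk_subpath_trans_mk_subpath]⟩
  rw [← Quotient.eq, Quotient.mk_trans]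
  refine PreconnectedSpace.induction₂' P (fun t => ?_) htrans t₀ t₁
  filter_upwards [h t] with s hs
  have hP : P t s := by dsimp only [P]; rw [← Quotient.mk_trans, Quotient.eq]; exact hs
  exact ⟨hP, hsymm t s hP⟩

end Path.Homotopic

theorem IsCompact.exists_lt_subset_ball {E : Type*} [PseudoMetricSpace E] {s : Set E} {c : E}
    {r : ℝ} (hs : IsCompact s) (h : s ⊆ ball c r) : ∃ r' < r, s ⊆ ball c r' := by
  rcases s.eq_empty_or_nonempty with rfl | hne
  · exact ⟨r - 1, by linarith, empty_subset _⟩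
  obtain ⟨y, hys, hy⟩ := hs.exists_isMaxOn hne (continuous_const.dist continuous_id).continuousOn
  obtain ⟨r', hyr', hr'⟩ := exists_between (mem_ball'.1 (h hys))
  exact ⟨r', hr', fun z hz => mem_ball'.2 ((hy hz).trans_lt hyr')⟩

section LengthSpace

variable {X : Type*} [MetricSpace X] {a b q : X}

theorem IsLengthSpace.exists_pathLength_lt (hX : IsLengthSpace X) {ρ : ℝ} (h : dist a b < ρ) :
    ∃ γ : Path a b, pathLength γ < ENNReal.ofReal ρ := by
  obtain ⟨γ, hγ⟩ := hX a b (ρ - dist a b) (sub_pos.2 h)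
  exact ⟨γ, by rwa [add_sub_cancel] at hγ⟩

theorem eventually_trans_subpath_homotopic {γ : Path a b} (hγ : pathLength γ ≠ ∞)
    {spoke : ∀ t, Path q (γ t)} {ρ Λ : ℝ≥0∞} (hspoke : ∀ t, pathLength (spoke t) < ρ)
    (hρ : ρ + ρ < Λ) (hcontr : ∀ ℓ : Path q q, pathLength ℓ < Λ → ℓ.Homotopic (Path.refl q))
    (t : I) : ∀ᶠ s in 𝓝 t, ((spoke t).trans (γ.subpath t s)).Homotopic (spoke s) := by
  obtain ⟨ε, hε, hρε⟩ : ∃ ε > 0, ρ + ε + ρ ≤ Λ :=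
    ⟨Λ - (ρ + ρ), tsub_pos_of_lt hρ, by rw [add_right_comm, add_tsub_cancel_of_le hρ.le]⟩
  filter_upwards [BoundedVariationOn.eventually_eVariationOn_uIcc_lt hγ
    γ.continuous.continuousAt hε] with s hs
  refine Path.Homotopic.of_trans_symm (hcontr _ ?_)
  calc pathLength (((spoke t).trans (γ.subpath t s)).trans (spoke s).symm)
      ≤ pathLength (spoke t) + pathLength (γ.subpath t s) + pathLength (spoke s) := by
        grw [pathLength_trans_le, pathLength_trans_le, pathLength_symm]
    _ < ρ + ε + ρ := ENNReal.add_lt_add (ENNReal.add_lt_add (hspoke t)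
        ((pathLength_subpath_le γ t s).trans_lt hs)) (hspoke s)
    _ ≤ Λ := hρε

end LengthSpace

theorem shortest_noncontractible_loop_in_ball_short_general
    {X : Type*} [MetricSpace X] (hX : IsLengthSpace X)
    {x : X} (C : Path x x) (L : ℝ) (hlen : pathLength C = ENNReal.ofReal L)
    (hnc : Noncontractible C)
    (hshort : ∀ (y : X) (γ : Path y y), Noncontractible γ → pathLength C ≤ pathLength γ)
    (q : X) (δ : ℝ) (himage : Set.range C ⊆ ball q δ) :
    L < 2 * δ := by
  by_contra! hδL
  have hcontr (y : X) (γ : Path y y) (hγ : pathLength γ < pathLength C) :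
      γ.Homotopic (Path.refl y) :=
    not_not.1 fun h => (hshort y γ h).not_gt hγ
  obtain ⟨ρ, hρδ, hCρ⟩ := (isCompact_range C.continuous).exists_lt_subset_ball himage
  choose spoke hspoke using fun t => hX.exists_pathLength_lt (mem_ball'.1 (hCρ (mem_range_self t)))
  have hρ : ENNReal.ofReal ρ + ENNReal.ofReal ρ < pathLength C := by
    have hρ₀ : 0 ≤ ρ := (pos_of_mem_ball (hCρ (mem_range_self 0))).le
    rw [hlen, ← ENNReal.ofReal_add hρ₀ hρ₀]
    exact (ENNReal.ofReal_lt_ofReal_iff (by linarith)).2 (by linarith)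
  have hC : (C.subpath 0 1).Homotopic ((spoke 0).symm.trans (spoke 1)) :=
    (Path.Homotopic.trans_subpath_of_eventually C spoke
      (eventually_trans_subpath_homotopic (hlen ▸ ENNReal.ofReal_ne_top) hspoke hρ
        (hcontr q)) 0 1).symm_trans_of_trans
  rw [Path.subpath_zero_one] at hC
  refine hnc ((hC.pathCast C.source.symm C.target.symm).trans (hcontr x _ ?_))
  calc pathLength (((spoke 0).symm.trans (spoke 1)).cast C.source.symm C.target.symm)
      ≤ pathLength (spoke 0) + pathLength (spoke 1) := by
        grw [pathLength_cast, pathLength_trans_le, pathLength_symm]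
    _ < pathLength C := (ENNReal.add_lt_add (hspoke 0) (hspoke 1)).trans hρ

/-- In a compact length space, a shortest noncontractible rectifiable loop
of length `L` whose image is contained in an open ball `B(q, δ)` satisfies `L < 2δ`. -/
theorem shortest_noncontractible_loop_in_ball_short
    {X : Type*} [MetricSpace X] [CompactSpace X] (hX : IsLengthSpace X)
    {x : X} (C : Path x x) (L : ℝ) (hlen : pathLength C = ENNReal.ofReal L) (hL : 0 ≤ L)
    (hnc : Noncontractible C)
    (hshort : ∀ (y : X) (γ : Path y y), Noncontractible γ → pathLength C ≤ pathLength γ)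
    (q : X) (δ : ℝ) (himage : Set.range C ⊆ ball q δ) :
    L < 2 * δ :=
  shortest_noncontractible_loop_in_ball_short_general hX C L hlen hnc hshort q δ himage
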